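/- arXiv:2012.04317 — 2 statements merged into one kernel-verified Lean document; each statement's English description precedes it below -/
import Mathlib

section
/- Let (A,α) be an Ω-valued set, let Ã be the set of singletons of (A,α), and define α̃(σ,τ) := ⋁_{a∈A} σ(a) ∧ τ(a). Then (Ã,α̃) is an Ω-valued set, and the map (σ,a) ↦ σ(a) is an isomorphism of Ω-valued sets between (A,α) and (Ã,α̃) (composed either way with its inverse (a,σ) ↦ σ(a), one gets the respective identity morphisms α and α̃). -/
/-!
The singleton `α a` represents `a`, and any singleton `σ` satisfies `σ a ≤ α a a`; hence
`a ↦ α a` realises `α` as `⨆ σ, σ a ⊓ σ a'`. Conversely, two singletons meeting at some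
point agree everywhere: `σ a ⊓ α̃ σ τ ≤ τ a`, which gives transitivity of `α̃` and
extensionality of both evaluation relations.
-/

variable {Ω A B C : Type*}

/-- An `Ω`-valued set structure: a symmetric, transitive `Ω`-valued equality. -/
structure IsOSet [Order.Frame Ω] (α : A → A → Ω) : Prop where
  symm : ∀ a b, α a b = α b a
  trans : ∀ a b c, α a b ⊓ α b c ≤ α a c

/-- A morphism of `Ω`-valued sets, as a functional relation. -/
structure IsMorphism [Order.Frame Ω] (α : A → A → Ω) (β : B → B → Ω)
    (φ : A → B → Ω) : Prop where
  ext : ∀ a a' b b', α a a' ⊓ φ a b ⊓ β b b' ≤ φ a' b'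
  sv : ∀ a b b', φ a b ⊓ φ a b' ≤ β b b'
  total : ∀ a, α a a = ⨆ b, φ a b

/-- A singleton of an Ω-valued set (A,α). -/
def IsSingleton [Order.Frame Ω] (α : A → A → Ω) (σ : A → Ω) : Prop :=
  (∀ a a', σ a ⊓ α a a' ≤ σ a') ∧ (∀ a a', σ a ⊓ σ a' ≤ α a a')

/-- A strict relation on an Ω-valued set (A,α). -/
def IsStrict [Order.Frame Ω] (α : A → A → Ω) (σ : A → Ω) : Prop :=
  (∀ a a', σ a ⊓ α a a' ≤ σ a') ∧ (∀ a, σ a ≤ α a a)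

section Completion

variable [Order.Frame Ω] {α : A → A → Ω}

theorem IsOSet.isSingleton_apply (hα : IsOSet α) (a : A) : IsSingleton α (α a) :=
  ⟨hα.trans a, fun b c => hα.symm a b ▸ hα.trans b a c⟩

theorem IsOSet.le_apply_self (hα : IsOSet α) (a a' : A) : α a a' ≤ α a a := by
  simpa [hα.symm a' a] using hα.trans a a' a

theorem IsSingleton.le_apply_self {σ : A → Ω} (hσ : IsSingleton α σ) (a : A) :
    σ a ≤ α a a := by
  simpa using hσ.2 a a

theorem IsSingleton.inf_iSup_inf_le {σ τ : A → Ω} (hσ : IsSingleton α σ)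
    (hτ : IsSingleton α τ) (a : A) : σ a ⊓ ⨆ b, σ b ⊓ τ b ≤ τ a := by
  rw [inf_iSup_eq]
  refine iSup_le fun b => ?_
  calc σ a ⊓ (σ b ⊓ τ b) = τ b ⊓ (σ b ⊓ σ a) := by ac_rfl
    _ ≤ τ b ⊓ α b a := inf_le_inf_left _ (hσ.2 b a)
    _ ≤ τ a := hτ.1 b a

variable (α) in
/-- The `Ω`-valued equality `α̃` on the singletons of `(A, α)`. -/
def singletonEq (σ τ : {σ : A → Ω // IsSingleton α σ}) : Ω :=
  ⨆ a, σ.1 a ⊓ τ.1 a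

theorem inf_singletonEq_le (σ τ : {σ : A → Ω // IsSingleton α σ}) (a : A) :
    σ.1 a ⊓ singletonEq α σ τ ≤ τ.1 a :=
  σ.2.inf_iSup_inf_le τ.2 a

variable (α) in
theorem isOSet_singletonEq : IsOSet (singletonEq α) where
  symm σ τ := by simp only [singletonEq, inf_comm]
  trans σ τ ρ := by
    rw [singletonEq, iSup_inf_eq]
    refine iSup_le fun a => ?_
    calc σ.1 a ⊓ τ.1 a ⊓ singletonEq α τ ρ = σ.1 a ⊓ (τ.1 a ⊓ singletonEq α τ ρ) :=
          inf_assoc _ _ _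
      _ ≤ σ.1 a ⊓ ρ.1 a := inf_le_inf_left _ (inf_singletonEq_le τ ρ a)
      _ ≤ singletonEq α σ ρ := le_iSup (fun b => σ.1 b ⊓ ρ.1 b) a

theorem isMorphism_apply_singletonEq (hα : IsOSet α) :
    IsMorphism α (singletonEq α) (fun a σ => σ.1 a) where
  ext a a' σ τ :=
    calc α a a' ⊓ σ.1 a ⊓ singletonEq α σ τ = α a a' ⊓ (σ.1 a ⊓ singletonEq α σ τ) :=
          inf_assoc _ _ _
      _ ≤ α a a' ⊓ τ.1 a := inf_le_inf_left _ (inf_singletonEq_le σ τ a)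
      _ = τ.1 a ⊓ α a a' := inf_comm _ _
      _ ≤ τ.1 a' := τ.2.1 a a'
  sv a σ τ := le_iSup (fun b => σ.1 b ⊓ τ.1 b) a
  total a := le_antisymm
    (le_iSup (fun σ : {σ // IsSingleton α σ} => σ.1 a) ⟨α a, hα.isSingleton_apply a⟩)
    (iSup_le fun σ => σ.2.le_apply_self a)

variable (α) in
theorem isMorphism_singletonEq_apply :
    IsMorphism (singletonEq α) α (fun σ a => σ.1 a) where
  ext σ τ a a' :=
    calc singletonEq α σ τ ⊓ σ.1 a ⊓ α a a' = σ.1 a ⊓ singletonEq α σ τ ⊓ α a a' := by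
          rw [inf_comm (singletonEq α σ τ)]
      _ ≤ τ.1 a ⊓ α a a' := inf_le_inf_right _ (inf_singletonEq_le σ τ a)
      _ ≤ τ.1 a' := τ.2.1 a a'
  sv σ := σ.2.2
  total σ := by simp [singletonEq]

theorem iSup_singleton_inf_eq (hα : IsOSet α) (a a' : A) :
    ⨆ σ : {σ // IsSingleton α σ}, σ.1 a ⊓ σ.1 a' = α a a' :=
  le_antisymm (iSup_le fun σ => σ.2.2 a a') <|
    calc α a a' ≤ α a a ⊓ α a a' := le_inf (hα.le_apply_self a a') le_rfl
      _ ≤ _ := le_iSup (fun σ : {σ // IsSingleton α σ} => σ.1 a ⊓ σ.1 a')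
          ⟨α a, hα.isSingleton_apply a⟩

end Completion

/-- The completion (Ã, α̃) by singletons is an Ω-valued set, and
(σ,a) ↦ σ(a), (a,σ) ↦ σ(a) are mutually inverse isomorphisms: each is a
morphism, and both composites are the respective identities α and α̃. -/
theorem stmt11 [Order.Frame Ω] (α : A → A → Ω) (hα : IsOSet α) :
    IsOSet (fun σ τ : {σ : A → Ω // IsSingleton α σ} => ⨆ a, σ.1 a ⊓ τ.1 a) ∧
    IsMorphism α (fun σ τ : {σ : A → Ω // IsSingleton α σ} => ⨆ a, σ.1 a ⊓ τ.1 a)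
      (fun a σ => σ.1 a) ∧
    IsMorphism (fun σ τ : {σ : A → Ω // IsSingleton α σ} => ⨆ a, σ.1 a ⊓ τ.1 a) α
      (fun σ a => σ.1 a) ∧
    (∀ a a' : A, (⨆ σ : {σ : A → Ω // IsSingleton α σ}, σ.1 a ⊓ σ.1 a') = α a a') ∧
    (∀ σ τ : {σ : A → Ω // IsSingleton α σ},
      (⨆ a, σ.1 a ⊓ τ.1 a) = ⨆ a, σ.1 a ⊓ τ.1 a) :=
  ⟨isOSet_singletonEq α, isMorphism_apply_singletonEq hα, isMorphism_singletonEq_apply α,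
    iSup_singleton_inf_eq hα, fun _ _ => rfl⟩
end

section
/- Let φ : (B,β) → (A,α) be a morphism of Ω-valued sets and σ a strict relation on (A,α). Then the two expressions ⋁_{a∈A} φ(b,a) ∧ σ(a) and β(b,b) ∧ ⋀_{a∈A} (φ(b,a) ⇒ σ(a)) coincide for every b ∈ B, and this common value defines a strict relation φ*σ on (B,β). -/
/-!
The existential form is below the universal one because `φ` is single-valued and `σ` is
extensional; conversely, totality `β b b = ⨆ a, φ b a` and modus ponens
`φ b a ⊓ (φ b a ⇨ σ a) = φ b a ⊓ σ a` give the reverse inequality. Strictness of the pullback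
comes from extensionality of `φ` in its first argument, using `σ a ≤ α a a`.
-/

variable {Ω A B C : Type*}

/-- The pullback `φ*σ` of `σ` along `φ`, in its existential form. -/
def pullback [Order.Frame Ω] (φ : B → A → Ω) (σ : A → Ω) (b : B) : Ω :=
  ⨆ a, φ b a ⊓ σ a

namespace IsMorphism

variable [Order.Frame Ω] {α : A → A → Ω} {β : B → B → Ω} {φ : B → A → Ω} {σ : A → Ω}

theorem le_diag (hφ : IsMorphism β α φ) (b : B) (a : A) : φ b a ≤ β b b :=
  (le_iSup (φ b) a).trans (hφ.total b).ge

theorem pullback_le_diag (hφ : IsMorphism β α φ) (b : B) : pullback φ σ b ≤ β b b :=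
  iSup_le fun a => inf_le_left.trans (hφ.le_diag b a)

theorem pullback_le_himp (hφ : IsMorphism β α φ) (hσ : ∀ a a', σ a ⊓ α a a' ≤ σ a')
    (b : B) (a' : A) : pullback φ σ b ≤ φ b a' ⇨ σ a' :=
  iSup_le fun a => le_himp_iff.mpr <|
    calc φ b a ⊓ σ a ⊓ φ b a' = σ a ⊓ (φ b a ⊓ φ b a') := by ac_rfl
      _ ≤ σ a ⊓ α a a' := inf_le_inf_left _ (hφ.sv b a a')
      _ ≤ σ a' := hσ a a'

theorem inf_iInf_himp_le_pullback (hφ : IsMorphism β α φ) (b : B) :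
    β b b ⊓ ⨅ a, (φ b a ⇨ σ a) ≤ pullback φ σ b := by
  rw [hφ.total b, iSup_inf_eq]
  refine iSup_le fun a => le_iSup_of_le a ?_
  calc φ b a ⊓ ⨅ a, (φ b a ⇨ σ a) ≤ φ b a ⊓ (φ b a ⇨ σ a) := inf_le_inf_left _ (iInf_le _ a)
    _ = φ b a ⊓ σ a := inf_himp _ _

theorem pullback_eq_inf_iInf_himp (hφ : IsMorphism β α φ) (hσ : ∀ a a', σ a ⊓ α a a' ≤ σ a')
    (b : B) : pullback φ σ b = β b b ⊓ ⨅ a, (φ b a ⇨ σ a) :=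
  le_antisymm (le_inf (hφ.pullback_le_diag b) (le_iInf (hφ.pullback_le_himp hσ b)))
    (hφ.inf_iInf_himp_le_pullback b)

theorem isStrict_pullback (hφ : IsMorphism β α φ) (hσ : IsStrict α σ) :
    IsStrict β (pullback φ σ) := by
  refine ⟨fun b b' => ?_, hφ.pullback_le_diag⟩
  rw [pullback, iSup_inf_eq]
  refine iSup_le fun a => le_iSup_of_le a (le_inf ?_ (inf_le_left.trans inf_le_right))
  calc φ b a ⊓ σ a ⊓ β b b' ≤ β b b' ⊓ φ b a ⊓ α a a :=
        le_inf (le_inf inf_le_right (inf_le_left.trans inf_le_left))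
          (inf_le_left.trans (inf_le_right.trans (hσ.2 a)))
    _ ≤ φ b' a := hφ.ext b b' a a

end IsMorphism

theorem stmt14_general [Order.Frame Ω] (α : A → A → Ω) (β : B → B → Ω)
    (φ : B → A → Ω) (hφ : IsMorphism β α φ)
    (σ : A → Ω) (hσ : IsStrict α σ) :
    (∀ b, (⨆ a, φ b a ⊓ σ a) = β b b ⊓ ⨅ a, (φ b a ⇨ σ a)) ∧
    IsStrict β (fun b => ⨆ a, φ b a ⊓ σ a) :=
  ⟨hφ.pullback_eq_inf_iInf_himp hσ.1, hφ.isStrict_pullback hσ⟩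

/-- Pullback of a strict relation along a morphism: the two defining
expressions coincide, and the result is a strict relation on (B,β). -/
theorem stmt14 [Order.Frame Ω] (α : A → A → Ω) (β : B → B → Ω)
    (hα : IsOSet α) (hβ : IsOSet β)
    (φ : B → A → Ω) (hφ : IsMorphism β α φ)
    (σ : A → Ω) (hσ : IsStrict α σ) :
    (∀ b, (⨆ a, φ b a ⊓ σ a) = β b b ⊓ ⨅ a, (φ b a ⇨ σ a)) ∧
    IsStrict β (fun b => ⨆ a, φ b a ⊓ σ a) :=
  stmt14_general α β φ hφ σ hσ
end
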